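/- arXiv:2004.09436 — 3 statements merged into one kernel-verified Lean document; each statement's English description precedes it below -/
import Mathlib

section
/- Let p be an odd prime, n ≥ 2, and 0 ≤ ℓ < n. The power map x ↦ x^{(p^ℓ+1)/2} is perfect (-1)-nonlinear over F_{p^n} if and only if one of the following holds: (1) ℓ = 0; (2) ℓ is even and n is odd; (3) ℓ and n are both even and, writing n = 2^{t₁}·u and ℓ = 2^{t₂}·v with u, v odd, one has t₂ ≥ t₁ + 1. -/
/-!
Put d = (p^ℓ + 1)/2 and q = |F|. Rescaling x reduces the question to the injectivity of x ↦ x^d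
and of ψ(x) = (x + 1)^d + x^d on F. Substitute x = (v - 1)²/(4v) with v in an algebraic closure:
because 2d = p^ℓ + 1 and Frobenius is additive, (v ± 1)^(2d) = (v^(p^ℓ) ± 1)(v ± 1), whence
4^d ψ(x) = 2(v^d + v^(-d)). The v arising from points of F are exactly those with v^q = v^(±1),
a set inside the (q² - 1)-th roots of unity and stable under inversion, so ψ is injective iff
v ↦ v^d is injective there, i.e. iff gcd(d, q² - 1) = 1; a primitive r-th root of unity for a
common prime divisor r produces a collision. Finally gcd((p^ℓ + 1)/2, p^(2n) - 1) = 1 iff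
ℓ = 0 or ν₂(n) < ν₂(ℓ): a common prime r forces the order of p mod r to divide 2n and 2ℓ but not
ℓ, and conversely (p^g + 1)/2 with g = 2^ν₂(ℓ) is a common divisor when ν₂(ℓ) ≤ ν₂(n).
-/

open Function

namespace Nat

theorem factorization_two_pow_mul_odd {t u : ℕ} (hu : Odd u) :
    (2 ^ t * u).factorization 2 = t := by
  simp [factorization_mul (pow_ne_zero t two_ne_zero) hu.pos.ne',
    factorization_eq_zero_of_not_dvd hu.not_two_dvd_nat, prime_two.factorization_self]

theorem factorization_two_lt_of_dvd_two_mul {o ℓ : ℕ} (h : o ∣ 2 * ℓ) (hn : ¬ o ∣ ℓ) :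
    ℓ.factorization 2 < o.factorization 2 := by
  have hℓ : ℓ ≠ 0 := by rintro rfl; exact hn (dvd_zero o)
  have ho : o ≠ 0 := ne_zero_of_dvd_ne_zero (by positivity) h
  by_contra! hle
  refine hn ((factorization_le_iff_dvd ho hℓ).1 fun q => ?_)
  have hq := (factorization_le_iff_dvd ho (by positivity)).2 h q
  rcases eq_or_ne q 2 with rfl | hq2
  · exact hle
  · simpa [factorization_mul two_ne_zero hℓ, prime_two.factorization, hq2] using hq

end Nat

theorem factorization_two_lt_of_pow_eq_neg_one {R : Type*} [Ring R] {x : R} {ℓ m : ℕ}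
    (hR : (-1 : R) ≠ 1) (hℓ : x ^ ℓ = -1) (hm : x ^ m = 1) (hm0 : m ≠ 0) :
    ℓ.factorization 2 < m.factorization 2 := by
  have h2ℓ : orderOf x ∣ 2 * ℓ := orderOf_dvd_of_pow_eq_one (by rw [pow_mul', hℓ, neg_one_sq])
  have hnℓ : ¬ orderOf x ∣ ℓ := fun h => hR (hℓ ▸ orderOf_dvd_iff_pow_eq_one.1 h)
  have hom : orderOf x ∣ m := orderOf_dvd_of_pow_eq_one hm
  calc ℓ.factorization 2 < (orderOf x).factorization 2 :=
        Nat.factorization_two_lt_of_dvd_two_mul h2ℓ hnℓ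
    _ ≤ m.factorization 2 :=
        (Nat.factorization_le_iff_dvd (ne_zero_of_dvd_ne_zero hm0 hom) hm0).2 hom 2

section CoprimeCriterion

variable {p ℓ n d : ℕ}

theorem not_coprime_of_factorization_two_le (hp : Odd p) (hp1 : p ≠ 1) (hd : 2 * d = p ^ ℓ + 1)
    (hℓ : ℓ ≠ 0) (h : ℓ.factorization 2 ≤ n.factorization 2) :
    ¬ d.Coprime (p ^ (2 * n) - 1) := by
  obtain ⟨a, k, hk, rfl⟩ := Nat.exists_eq_two_pow_mul_odd hℓ
  rw [Nat.factorization_two_pow_mul_odd hk] at h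
  obtain ⟨c, hc⟩ : Even (p ^ 2 ^ a + 1) := hp.pow.add_one
  have hcd : c ∣ d := by
    refine Nat.dvd_of_mul_dvd_mul_left two_pos ?_
    rw [hd, pow_mul, two_mul, ← hc]
    simpa using hk.nat_add_dvd_pow_add_pow (p ^ 2 ^ a) 1
  have hcN : c ∣ p ^ (2 * n) - 1 := by
    have h2a : 2 ^ a ∣ n := (pow_dvd_pow 2 h).trans (Nat.ordProj_dvd n 2)
    calc c ∣ p ^ 2 ^ a + 1 := ⟨2, by omega⟩
      _ ∣ (p ^ 2 ^ a) ^ 2 - 1 ^ 2 := by rw [Nat.sq_sub_sq]; exact dvd_mul_right _ _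
      _ ∣ p ^ (2 * n) - 1 := by
        rw [one_pow, ← pow_mul, mul_comm]
        exact Nat.pow_sub_one_dvd_pow_sub_one p (mul_dvd_mul_left 2 h2a)
  intro hcop
  have hc1 : c = 1 := (hcop.coprime_dvd_left hcd).eq_one_of_dvd hcN
  have : p ^ 2 ^ a = 1 := by omega
  simp [hp1] at this

theorem odd_of_two_mul_eq_pow_add_one (hp : Odd p) (hℓ : Even ℓ) (hd : 2 * d = p ^ ℓ + 1) :
    Odd d := by
  obtain ⟨m, rfl⟩ := hℓ
  obtain ⟨j, hj⟩ := hp.pow (n := m)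
  rw [← two_mul, pow_mul', hj] at hd
  exact ⟨j * j + j, by nlinarith⟩

theorem coprime_of_factorization_two_lt (hp : Odd p) (hd : 2 * d = p ^ ℓ + 1) (hn : n ≠ 0)
    (h : n.factorization 2 < ℓ.factorization 2) : d.Coprime (p ^ (2 * n) - 1) := by
  have hℓ : Even ℓ := even_iff_two_dvd.2 (Nat.dvd_of_factorization_pos (by omega))
  refine Nat.coprime_of_dvd fun r hr hrd hrN => ?_
  have hr2 : r ≠ 2 := by
    rintro rfl
    exact (odd_of_two_mul_eq_pow_add_one hp hℓ hd).not_two_dvd_nat hrd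
  have : Fact (2 < r) := ⟨lt_of_le_of_ne hr.two_le hr2.symm⟩
  have hpℓ : (p : ZMod r) ^ ℓ = -1 := by
    have : ((2 * d : ℕ) : ZMod r) = 0 := by
      rw [(ZMod.natCast_eq_zero_iff _ _).2 (dvd_mul_of_dvd_right hrd 2)]
    rw [hd] at this; push_cast at this
    exact eq_neg_of_add_eq_zero_left this
  have hpn : (p : ZMod r) ^ (2 * n) = 1 := by
    have := (ZMod.natCast_eq_zero_iff _ _).2 hrN
    rw [Nat.cast_sub (Nat.one_le_pow _ _ hp.pos)] at this; push_cast at this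
    exact sub_eq_zero.1 this
  have := factorization_two_lt_of_pow_eq_neg_one ZMod.neg_one_ne_one hpℓ hpn (by positivity)
  rw [Nat.factorization_mul two_ne_zero hn] at this
  simp only [Nat.prime_two.factorization, Finsupp.coe_add, Pi.add_apply,
    Finsupp.single_eq_same] at this
  omega

theorem coprime_pow_two_mul_sub_one_iff (hp : Odd p) (hp1 : p ≠ 1) (hd : 2 * d = p ^ ℓ + 1)
    (hn : n ≠ 0) :
    d.Coprime (p ^ (2 * n) - 1) ↔ ℓ = 0 ∨ n.factorization 2 < ℓ.factorization 2 := by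
  rcases eq_or_ne ℓ 0 with rfl | hℓ
  · simp [show d = 1 by simpa using hd]
  refine ⟨fun h => .inr ?_, fun h => ?_⟩
  · by_contra! hle
    exact not_coprime_of_factorization_two_le hp hp1 hd hℓ hle h
  · exact coprime_of_factorization_two_lt hp hd hn (h.resolve_left hℓ)

end CoprimeCriterion

theorem cases_iff_factorization_two_lt {ℓ n : ℕ} (hn : n ≠ 0) :
    (ℓ = 0 ∨ (Even ℓ ∧ Odd n) ∨ (Even ℓ ∧ Even n ∧
        ∀ t₁ u t₂ v : ℕ, Odd u → Odd v → n = 2 ^ t₁ * u → ℓ = 2 ^ t₂ * v → t₁ + 1 ≤ t₂)) ↔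
      (ℓ = 0 ∨ n.factorization 2 < ℓ.factorization 2) := by
  rcases eq_or_ne ℓ 0 with rfl | hℓ
  · simp
  obtain ⟨a, u, hu, rfl⟩ := Nat.exists_eq_two_pow_mul_odd hn
  obtain ⟨b, v, hv, rfl⟩ := Nat.exists_eq_two_pow_mul_odd hℓ
  have hall : (∀ t₁ u' t₂ v' : ℕ, Odd u' → Odd v' → 2 ^ a * u = 2 ^ t₁ * u' →
      2 ^ b * v = 2 ^ t₂ * v' → t₁ + 1 ≤ t₂) ↔ a + 1 ≤ b := by
    refine ⟨fun h => h a u b v hu hv rfl rfl, fun h t₁ u' t₂ v' hu' hv' h₁ h₂ => ?_⟩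
    have e₁ := congrArg (Nat.factorization · 2) h₁
    have e₂ := congrArg (Nat.factorization · 2) h₂
    simp only [Nat.factorization_two_pow_mul_odd, hu, hu', hv, hv'] at e₁ e₂
    omega
  rw [hall]
  simp only [hℓ, Nat.factorization_two_pow_mul_odd hu, Nat.factorization_two_pow_mul_odd hv,
    Nat.even_mul, Nat.even_pow, even_two, true_and, Nat.not_even_iff_odd.2 hu,
    Nat.not_even_iff_odd.2 hv, ← Nat.not_even_iff_odd, or_false, false_or]
  omega

theorem four_ne_zero_of_two_ne_zero {R : Type*} [Semiring R] [NoZeroDivisors R]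
    (h2 : (2 : R) ≠ 0) : (4 : R) ≠ 0 := by
  rw [show (4 : R) = 2 * 2 by norm_num]
  exact mul_ne_zero h2 h2

theorem eq_of_pow_eq_pow_of_coprime {G : Type*} [CommGroupWithZero G] {a b : G} {d N : ℕ}
    (hdN : d.Coprime N) (ha : a ^ N = 1) (hb : b ^ N = 1) (hb0 : b ≠ 0) (hab : a ^ d = b ^ d) :
    a = b := by
  have h₁ : (a / b) ^ d = 1 := by rw [div_pow, hab, div_self (pow_ne_zero _ hb0)]
  have h₂ : (a / b) ^ N = 1 := by rw [div_pow, ha, hb, div_one]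
  have := pow_gcd_eq_one.2 ⟨h₁, h₂⟩
  rwa [hdN.gcd_eq_one, pow_one, div_eq_one_iff_eq hb0] at this

theorem eq_or_mul_eq_one_of_add_inv_eq {K : Type*} [Field K] {a b : K} (ha : a ≠ 0) (hb : b ≠ 0)
    (h : a + a⁻¹ = b + b⁻¹) : a = b ∨ a * b = 1 := by
  have : (a - b) * (a * b - 1) = 0 := by
    field_simp at h
    linear_combination h
  rcases mul_eq_zero.1 this with h | h
  · exact .inl (sub_eq_zero.1 h)
  · exact .inr (sub_eq_zero.1 h)

theorem pow_sq_sub_one_eq_one_of_pow_eq_or_mul_eq_one {K : Type*} [Field K] {v : K} {q : ℕ}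
    (hv : v ≠ 0) (h : v ^ q = v ∨ v ^ q * v = 1) : v ^ (q ^ 2 - 1) = 1 := by
  have hvq : v ^ q ^ 2 = v := by
    rw [sq, pow_mul]
    rcases h with h | h
    · rw [h, h]
    · have hvq : v ^ q ≠ 0 := pow_ne_zero q hv
      apply mul_right_cancel₀ hvq
      rw [← mul_pow, h, one_pow, mul_comm, h]
  rcases Nat.eq_zero_or_pos q with rfl | hq
  · simp
  · rw [pow_sub₀ v hv (Nat.one_le_pow _ _ hq), hvq, pow_one, mul_inv_cancel₀ hv]

theorem exists_four_mul_mul_eq_sub_one_sq {K : Type*} [Field K] [IsAlgClosed K] (c : K) :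
    ∃ v : K, 4 * c * v = (v - 1) ^ 2 := by
  obtain ⟨z, hz⟩ := IsAlgClosed.exists_pow_nat_eq ((1 + 2 * c) ^ 2 - 1) two_pos
  exact ⟨1 + 2 * c + z, by linear_combination -hz⟩

theorem four_pow_mul_add_one_pow_add_pow {K : Type*} [Field K] {p : ℕ} [ExpChar K p] {ℓ d : ℕ}
    (hd : 2 * d = p ^ ℓ + 1) {x v : K} (hv : v ≠ 0) (hxv : 4 * x * v = (v - 1) ^ 2) :
    4 ^ d * ((x + 1) ^ d + x ^ d) = 2 * (v ^ d + (v ^ d)⁻¹) := by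
  have hxv' : 4 * (x + 1) * v = (v + 1) ^ 2 := by linear_combination hxv
  have hsq (y : K) : (y ^ 2) ^ d = y ^ p ^ ℓ * y := by rw [← pow_mul, hd, pow_succ]
  have key : (4 * v) ^ d * ((x + 1) ^ d + x ^ d) = 2 * (v ^ (2 * d) + 1) :=
    calc (4 * v) ^ d * ((x + 1) ^ d + x ^ d)
        = (4 * (x + 1) * v) ^ d + (4 * x * v) ^ d := by
          rw [mul_add, ← mul_pow, ← mul_pow, mul_right_comm 4 v, mul_right_comm 4 v]
      _ = ((v + 1) ^ 2) ^ d + ((v - 1) ^ 2) ^ d := by rw [hxv, hxv']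
      _ = (v ^ p ^ ℓ + 1) * (v + 1) + (v ^ p ^ ℓ - 1) * (v - 1) := by
          rw [hsq, hsq, add_pow_expChar_pow, sub_pow_expChar_pow, one_pow]
      _ = 2 * (v ^ (2 * d) + 1) := by rw [hd, pow_succ]; ring
  have hvd : v ^ d ≠ 0 := pow_ne_zero d hv
  rw [mul_pow] at key
  field_simp
  linear_combination key

section FiniteFieldExtension

variable {F K : Type*} [Field F] [Fintype F] [Field K] [Algebra F K]

open Polynomial in
theorem FiniteField.mem_range_algebraMap_of_pow_card_eq {x : K}
    (hx : x ^ Fintype.card F = x) : x ∈ (algebraMap F K).range := by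
  have hq : 1 < Fintype.card F := Fintype.one_lt_card
  have hroots := roots_map_of_injective_of_card_eq_natDegree (algebraMap F K).injective
    (p := X ^ Fintype.card F - X) (by
      rw [FiniteField.roots_X_pow_card_sub_X, FiniteField.X_pow_card_sub_X_natDegree_eq F hq]
      rfl)
  have hmem : x ∈ ((X ^ Fintype.card F - X : F[X]).map (algebraMap F K)).roots := by
    rw [mem_roots ((Polynomial.map_ne_zero_iff (algebraMap F K).injective).2
      (FiniteField.X_pow_card_sub_X_ne_zero F hq))]
    simp [hx]
  rw [← hroots, FiniteField.roots_X_pow_card_sub_X] at hmem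
  obtain ⟨y, -, rfl⟩ := Multiset.mem_map.1 hmem
  exact ⟨y, rfl⟩

theorem exists_four_mul_algebraMap_mul_eq_sub_one_sq_iff {v : K} (hv : v ≠ 0)
    (h2 : (2 : K) ≠ 0) :
    (∃ x : F, 4 * algebraMap F K x * v = (v - 1) ^ 2) ↔
      v ^ Fintype.card F = v ∨ v ^ Fintype.card F * v = 1 := by
  have hφ (y : K) : FiniteField.frobeniusAlgHom F K y = y ^ Fintype.card F := rfl
  constructor
  · -- v and v ^ q are both roots of X ^ 2 - (4x + 2) X + 1, whose roots multiply to 1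
    rintro ⟨x, hx⟩
    have hxq := congrArg (FiniteField.frobeniusAlgHom F K) hx
    simp only [map_mul, map_ofNat, AlgHom.commutes, map_pow, map_sub, map_one, hφ v] at hxq
    have : (v - v ^ Fintype.card F) * (v ^ Fintype.card F * v - 1) = 0 := by
      linear_combination v * hxq - v ^ Fintype.card F * hx
    rcases mul_eq_zero.1 this with h | h
    · exact .inl (sub_eq_zero.1 h).symm
    · exact .inr (sub_eq_zero.1 h)
  · intro h
    have h4 : (4 : K) ≠ 0 := four_ne_zero_of_two_ne_zero h2
    have hfix : ((v - 1) ^ 2 / (4 * v)) ^ Fintype.card F = (v - 1) ^ 2 / (4 * v) := by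
      rw [← hφ]
      simp only [map_div₀, map_pow, map_sub, map_one, map_mul, map_ofNat, hφ v]
      rcases h with h | h
      · rw [h]
      · rw [eq_inv_of_mul_eq_one_left h]
        field_simp
        ring
    obtain ⟨x, hx⟩ := FiniteField.mem_range_algebraMap_of_pow_card_eq hfix
    exact ⟨x, by rw [hx]; field_simp⟩

end FiniteFieldExtension

section AlgebraicClosure

variable {F : Type*} [Field F] [Fintype F]

local notation "K" => AlgebraicClosure F

theorem AlgebraicClosure.exists_four_mul_algebraMap_mul_eq_sub_one_sq (h2 : (2 : F) ≠ 0)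
    (x : F) :
    ∃ v : K, v ≠ 0 ∧ v ^ (Fintype.card F ^ 2 - 1) = 1 ∧
      4 * algebraMap F K x * v = (v - 1) ^ 2 := by
  obtain ⟨v, hv⟩ := exists_four_mul_mul_eq_sub_one_sq (algebraMap F K x)
  have hv0 : v ≠ 0 := by rintro rfl; norm_num at hv
  refine ⟨v, hv0, pow_sq_sub_one_eq_one_of_pow_eq_or_mul_eq_one hv0 ?_, hv⟩
  have h2K : (2 : K) ≠ 0 := by rw [← map_ofNat (algebraMap F K) 2]; exact (map_ne_zero _).2 h2
  exact (exists_four_mul_algebraMap_mul_eq_sub_one_sq_iff hv0 h2K).1 ⟨x, hv⟩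

variable {p : ℕ} [ExpChar F p] {ℓ d : ℕ}

theorem injective_add_one_pow_add_pow_of_coprime (h2 : (2 : F) ≠ 0) (hd : 2 * d = p ^ ℓ + 1)
    (hcop : d.Coprime (Fintype.card F ^ 2 - 1)) :
    Injective fun x : F => (x + 1) ^ d + x ^ d := by
  have : ExpChar K p := expChar_of_injective_algebraMap (algebraMap F K).injective p
  have h2K : (2 : K) ≠ 0 := by rw [← map_ofNat (algebraMap F K) 2]; exact (map_ne_zero _).2 h2
  intro x y hxy
  obtain ⟨v, hv0, hvN, hvx⟩ :=
    AlgebraicClosure.exists_four_mul_algebraMap_mul_eq_sub_one_sq h2 x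
  obtain ⟨w, hw0, hwN, hwy⟩ :=
    AlgebraicClosure.exists_four_mul_algebraMap_mul_eq_sub_one_sq h2 y
  have hsum : v ^ d + (v ^ d)⁻¹ = w ^ d + (w ^ d)⁻¹ := by
    have := congrArg (fun z => 4 ^ d * algebraMap F K z) hxy
    simp only [map_add, map_pow, map_one] at this
    rw [four_pow_mul_add_one_pow_add_pow hd hv0 hvx,
      four_pow_mul_add_one_pow_add_pow hd hw0 hwy] at this
    exact mul_left_cancel₀ h2K this
  have hvw : v = w ∨ v * w = 1 := by
    rcases eq_or_mul_eq_one_of_add_inv_eq (pow_ne_zero d hv0) (pow_ne_zero d hw0) hsum with h | h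
    · exact .inl (eq_of_pow_eq_pow_of_coprime hcop hvN hwN hw0 h)
    · refine .inr (eq_of_pow_eq_pow_of_coprime hcop ?_ (one_pow _) one_ne_zero ?_)
      · rw [mul_pow, hvN, hwN, one_mul]
      · rw [mul_pow, h, one_pow]
  have h4v : 4 * v ≠ 0 := mul_ne_zero (four_ne_zero_of_two_ne_zero h2K) hv0
  apply (algebraMap F K).injective
  apply mul_left_cancel₀ h4v
  rcases hvw with rfl | h
  · linear_combination hvx - hwy
  · linear_combination hvx - v ^ 2 * hwy + (4 * algebraMap F K y * v + 2 * v - 1 - v * w) * h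

theorem not_injective_add_one_pow_add_pow_of_prime_dvd (h2 : (2 : F) ≠ 0)
    (hd : 2 * d = p ^ ℓ + 1) {r : ℕ} (hr : r.Prime) (hrd : r ∣ d)
    (hrN : r ∣ Fintype.card F ^ 2 - 1) :
    ¬ Injective fun x : F => (x + 1) ^ d + x ^ d := by
  have : ExpChar K p := expChar_of_injective_algebraMap (algebraMap F K).injective p
  have h2K : (2 : K) ≠ 0 := by rw [← map_ofNat (algebraMap F K) 2]; exact (map_ne_zero _).2 h2
  have hq1 : 1 ≤ Fintype.card F := Fintype.card_pos
  have : NeZero (r : F) := ⟨fun h => by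
    have hN : ((Fintype.card F ^ 2 - 1 : ℕ) : F) = -1 := by
      rw [Nat.cast_sub (Nat.one_le_pow _ _ hq1), Nat.cast_pow, Nat.cast_card_eq_zero]; ring
    obtain ⟨k, hk⟩ := hrN
    rw [hk, Nat.cast_mul, h, zero_mul] at hN
    exact neg_ne_zero.2 one_ne_zero hN.symm⟩
  obtain ⟨ζ, hζ⟩ := HasEnoughRootsOfUnity.exists_primitiveRoot K r
  have hζ0 : ζ ≠ 0 := hζ.ne_zero hr.ne_zero
  have hζq : ζ ^ Fintype.card F = ζ ∨ ζ ^ Fintype.card F * ζ = 1 := by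
    rw [← one_pow 2, Nat.sq_sub_sq] at hrN
    rcases hr.dvd_mul.1 hrN with h | h
    · right
      rw [← pow_succ, hζ.pow_eq_one_iff_dvd]
      exact h
    · left
      conv_lhs => rw [← Nat.sub_add_cancel hq1, pow_succ, (hζ.pow_eq_one_iff_dvd _).2 h, one_mul]
  obtain ⟨x, hx⟩ := (exists_four_mul_algebraMap_mul_eq_sub_one_sq_iff hζ0 h2K).2 hζq
  have hx0 : x ≠ 0 := by
    rintro rfl
    have : (ζ - 1) ^ 2 = 0 := by simpa using hx.symm
    exact hζ.ne_one hr.one_lt (sub_eq_zero.1 (pow_eq_zero_iff two_ne_zero |>.1 this))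
  intro hinj
  refine hx0 (hinj ?_)
  apply (algebraMap F K).injective
  apply mul_left_cancel₀ (pow_ne_zero d (four_ne_zero_of_two_ne_zero h2K))
  simp only [map_add, map_pow, map_one, map_zero]
  rw [four_pow_mul_add_one_pow_add_pow hd hζ0 hx,
    four_pow_mul_add_one_pow_add_pow hd one_ne_zero (by ring : 4 * (0 : K) * 1 = (1 - 1) ^ 2),
    (hζ.pow_eq_one_iff_dvd d).2 hrd]
  simp

end AlgebraicClosure

theorem FiniteField.pow_injective_of_coprime {F : Type*} [Field F] [Fintype F] {d : ℕ}
    (hd0 : d ≠ 0) (h : d.Coprime (Fintype.card F - 1)) : Injective fun x : F => x ^ d := by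
  intro x y hxy
  simp only at hxy
  rcases eq_or_ne y 0 with rfl | hy
  · exact (pow_eq_zero_iff hd0).1 (hxy.trans (zero_pow hd0))
  have hx : x ≠ 0 := by
    rintro rfl
    exact hy ((pow_eq_zero_iff hd0).1 (hxy.symm.trans (zero_pow hd0)))
  exact eq_of_pow_eq_pow_of_coprime h (FiniteField.pow_card_sub_one_eq_one x hx)
    (FiniteField.pow_card_sub_one_eq_one y hy) hy hxy

theorem add_pow_add_pow_eq_pow_mul {F : Type*} [Field F] {a : F} (ha : a ≠ 0) (d : ℕ) (x : F) :
    (x + a) ^ d + x ^ d = a ^ d * ((x / a + 1) ^ d + (x / a) ^ d) := by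
  rw [mul_add, ← mul_pow, ← mul_pow, mul_add, mul_div_cancel₀ x ha, mul_one]

theorem bijective_add_pow_add_pow_iff_coprime {F : Type*} [Field F] [Fintype F] {p : ℕ}
    [ExpChar F p] {ℓ d : ℕ} (h2 : (2 : F) ≠ 0) (hd : 2 * d = p ^ ℓ + 1) :
    (∀ a : F, Bijective fun x => (x + a) ^ d + x ^ d) ↔ d.Coprime (Fintype.card F ^ 2 - 1) := by
  refine ⟨fun h => ?_, fun hcop a => ?_⟩
  · by_contra hcop
    obtain ⟨r, hr, hrd, hrN⟩ := Nat.Prime.not_coprime_iff_dvd.1 hcop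
    exact not_injective_add_one_pow_add_pow_of_prime_dvd h2 hd hr hrd hrN (h 1).injective
  rw [← Finite.injective_iff_bijective]
  rcases eq_or_ne a 0 with rfl | ha
  · have hcop' := hcop.coprime_dvd_right (by simpa using Nat.sub_one_dvd_pow_sub_one _ 2)
    simp only [add_zero, ← two_mul]
    exact (mul_right_injective₀ h2).comp (FiniteField.pow_injective_of_coprime (by omega) hcop')
  · simp only [add_pow_add_pow_eq_pow_mul ha]
    exact (mul_right_injective₀ (pow_ne_zero d ha)).comp
      ((injective_add_one_pow_add_pow_of_coprime h2 hd hcop).comp fun _ _ => (div_left_inj' ha).1)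

theorem stmt_9_general (p ℓ n : ℕ) (hp : p.Prime) (hp2 : p ≠ 2) (hn : 2 ≤ n)
    (F : Type) [Field F] [Fintype F] (hF : Fintype.card F = p ^ n) :
    (∀ a : F, Function.Bijective fun x : F =>
        (x + a) ^ ((p ^ ℓ + 1) / 2) + x ^ ((p ^ ℓ + 1) / 2)) ↔
      (ℓ = 0 ∨ (Even ℓ ∧ Odd n) ∨
        (Even ℓ ∧ Even n ∧
          ∀ t₁ u t₂ v : ℕ, Odd u → Odd v → n = 2 ^ t₁ * u → ℓ = 2 ^ t₂ * v → t₁ + 1 ≤ t₂)) := by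
  have : Fact p.Prime := ⟨hp⟩
  have : CharP F p := charP_of_card_eq_prime_pow hF
  have h2 : (2 : F) ≠ 0 := Ring.two_ne_zero (by rwa [ringChar.eq F p])
  have hp_odd : Odd p := hp.odd_of_ne_two hp2
  have hd : 2 * ((p ^ ℓ + 1) / 2) = p ^ ℓ + 1 := Nat.two_mul_div_two_of_even hp_odd.pow.add_one
  rw [bijective_add_pow_add_pow_iff_coprime h2 hd, hF, ← pow_mul, mul_comm,
    coprime_pow_two_mul_sub_one_iff hp_odd hp.one_lt.ne' hd (by omega),
    cases_iff_factorization_two_lt (by omega)]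

theorem stmt_9 (p ℓ n : ℕ) (hp : p.Prime) (hp2 : p ≠ 2) (hn : 2 ≤ n) (hℓn : ℓ < n)
    (F : Type) [Field F] [Fintype F] (hF : Fintype.card F = p ^ n) :
    (∀ a : F, Function.Bijective fun x : F =>
        (x + a) ^ ((p ^ ℓ + 1) / 2) + x ^ ((p ^ ℓ + 1) / 2)) ↔
      (ℓ = 0 ∨ (Even ℓ ∧ Odd n) ∨
        (Even ℓ ∧ Even n ∧
          ∀ t₁ u t₂ v : ℕ, Odd u → Odd v → n = 2 ^ t₁ * u → ℓ = 2 ^ t₂ * v → t₁ + 1 ≤ t₂)) :=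
  stmt_9_general p ℓ n hp hp2 hn F hF
end

section
/- Let a be a nonzero element of F_{p^n}. The d-th Dickson polynomial of the first kind D_d(x, a) permutes F_{p^n} if and only if gcd(d, p^{2n} - 1) = 1. -/
/-!
Let `q = #F` and let `K` be an algebraic closure of `F`. Every `x ∈ F` can be written as
`x = y + a / y` with `y ∈ Kˣ`, and then `D_d(x) = y ^ d + (a / y) ^ d`. Since `x` is fixed by
the Frobenius `y ↦ y ^ q`, so is the pair `{y, a / y}`, hence `y ^ q ∈ {y, a / y}` and
`y ^ (q ^ 2 - 1) = 1`. Moreover `y + a / y = z + a / z` iff `y = z` or `y * z = a`.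

If `gcd(d, q ^ 2 - 1) = 1`, then `w ↦ w ^ d` is injective on `(q ^ 2 - 1)`-th roots of unity,
and this forces `D_d` to be injective. Conversely, let a prime `l` divide `d` and `q + 1`
(resp. `q - 1`), and let `ζ ≠ 1` be an `l`-th root of unity. Every root of `y ^ (q + 1) = a`
(resp. `y ^ (q - 1) = 1`) gives `y + a / y ∈ F`, and so does `ζ * y`; choosing `y` with
`ζ * y ^ 2 ≠ a`, the two points `y + a / y ≠ ζ * y + a / (ζ * y)` of `F` have the same image
under `D_d`.
-/

open Polynomial Function

theorem Polynomial.dickson_one_eval_add_of_mul_eq {R : Type*} [CommRing R] {a x y : R}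
    (h : x * y = a) : ∀ n, (dickson 1 a n).eval (x + y) = x ^ n + y ^ n
  | 0 => by norm_num [dickson_zero]
  | 1 => by simp
  | n + 2 => by
    rw [dickson_add_two, eval_sub, eval_mul, eval_mul, eval_X, eval_C,
      dickson_one_eval_add_of_mul_eq h n, dickson_one_eval_add_of_mul_eq h (n + 1), ← h]
    ring

section Field

variable {K : Type*} [Field K]

theorem add_div_eq_add_div_iff {b y z : K} (hy : y ≠ 0) (hz : z ≠ 0) :
    y + b / y = z + b / z ↔ y = z ∨ y * z = b := by
  have key : y + b / y - (z + b / z) = (y - z) * (y * z - b) / (y * z) := by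
    field_simp
    ring
  rw [← sub_eq_zero, key, div_eq_zero_iff, mul_eq_zero, mul_eq_zero, sub_eq_zero, sub_eq_zero]
  simp [hy, hz]

theorem eq_of_pow_eq_of_coprime {u v : K} {d N : ℕ} (hdN : d.Coprime N) (hN : N ≠ 0)
    (hu : u ^ N = 1) (hv : v ^ N = 1) (h : u ^ d = v ^ d) : u = v := by
  have hv0 : v ≠ 0 := by rintro rfl; simp [zero_pow hN] at hv
  have hw : (u / v) ^ d.gcd N = 1 := pow_gcd_eq_one.mpr
    ⟨by rw [div_pow, h, div_self (pow_ne_zero _ hv0)], by rw [div_pow, hu, hv, div_one]⟩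
  rwa [hdN.gcd_eq_one, pow_one, div_eq_one_iff_eq hv0] at hw

theorem eq_or_mul_eq_of_pow_add_div_pow_eq {b y z : K} {d N : ℕ} (hdN : d.Coprime N)
    (hN : N ≠ 0) (hb : b ^ N = 1) (hy : y ^ N = 1) (hz : z ^ N = 1)
    (h : y ^ d + b ^ d / y ^ d = z ^ d + b ^ d / z ^ d) : y = z ∨ y * z = b := by
  have ne_zero {w : K} (hw : w ^ N = 1) : w ≠ 0 := by rintro rfl; simp [zero_pow hN] at hw
  rw [add_div_eq_add_div_iff (pow_ne_zero _ (ne_zero hy)) (pow_ne_zero _ (ne_zero hz)),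
    ← mul_pow] at h
  refine h.imp (eq_of_pow_eq_of_coprime hdN hN hy hz) (eq_of_pow_eq_of_coprime hdN hN ?_ hb)
  rw [mul_pow, hy, hz, one_mul]

theorem map_add_div_eq_self_iff {G : Type*} [FunLike G K K] [RingHomClass G K K] (σ : G)
    {b y : K} (hb : σ b = b) (hy : y ≠ 0) :
    σ (y + b / y) = y + b / y ↔ σ y = y ∨ σ y = b / y := by
  rw [map_add, map_div₀, hb, add_div_eq_add_div_iff ((map_ne_zero σ).mpr hy) hy, eq_div_iff hy]

theorem map_map_eq_of_map_eq_or {G : Type*} [FunLike G K K] [RingHomClass G K K] (σ : G)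
    {b y : K} (hb : σ b = b) (hb0 : b ≠ 0) (h : σ y = y ∨ σ y = b / y) : σ (σ y) = y := by
  rcases h with h | h
  · rw [h, h]
  · rw [h, map_div₀, hb, h, div_div_cancel₀ hb0]

theorem IsAlgClosed.exists_add_div_eq [IsAlgClosed K] {b : K} (hb : b ≠ 0) (t : K) :
    ∃ y, y ≠ 0 ∧ y + b / y = t := by
  have hdeg : (C 1 * X ^ 2 + C (-t) * X + C b).degree ≠ 0 := by
    rw [degree_quadratic one_ne_zero]; decide
  obtain ⟨y, hy⟩ := IsAlgClosed.exists_root _ hdeg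
  simp only [IsRoot, eval_add, eval_mul, eval_C, eval_pow, eval_X] at hy
  have hy0 : y ≠ 0 := by rintro rfl; simp [hb] at hy
  refine ⟨y, hy0, ?_⟩
  field_simp
  linear_combination hy

theorem IsAlgClosed.exists_pow_eq_and_notMem [IsAlgClosed K] {m : ℕ} (hm : (m : K) ≠ 0)
    {c : K} (hc : c ≠ 0) {s : Finset K} (hs : s.card < m) : ∃ y, y ^ m = c ∧ y ∉ s := by
  have : NeZero (m : K) := ⟨hm⟩
  have hm0 : 0 < m := Nat.pos_of_ne_zero (by rintro rfl; simp at hm)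
  obtain ⟨ξ, hξ⟩ := HasEnoughRootsOfUnity.exists_primitiveRoot K m
  obtain ⟨y₀, hy₀⟩ := IsAlgClosed.exists_pow_nat_eq c hm0
  have hcard : (nthRootsFinset m c).card = m := by
    classical
    rw [nthRootsFinset_def, Multiset.toFinset_card_of_nodup (hξ.nthRoots_nodup hc),
      hξ.card_nthRoots, if_pos ⟨y₀, hy₀⟩]
  obtain ⟨y, hy, hys⟩ := Finset.exists_mem_notMem_of_card_lt_card (hcard ▸ hs)
  exact ⟨y, (mem_nthRootsFinset hm0 c).mp hy, hys⟩

end Field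

theorem algebraMap_eval_dickson_one {F K : Type*} [CommRing F] [Field K] [Algebra F K]
    {a x : F} {y : K} (hy : y ≠ 0) (hx : algebraMap F K x = y + algebraMap F K a / y) (d : ℕ) :
    algebraMap F K ((dickson 1 a d).eval x) = y ^ d + (algebraMap F K a / y) ^ d := by
  rw [← eval₂_at_apply, ← eval_map, map_dickson, hx,
    dickson_one_eval_add_of_mul_eq (mul_div_cancel₀ _ hy)]

namespace FiniteField

variable {F K : Type*} [Field F] [Fintype F] [Field K] [Algebra F K] {a : F}

local notation "q" => Fintype.card F

theorem natCast_card_eq_zero : (q : K) = 0 := by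
  rw [← map_natCast (algebraMap F K), cast_card_eq_zero, map_zero]

theorem exists_algebraMap_eq_of_pow_card_eq {t : K} (ht : t ^ q = t) :
    ∃ x : F, algebraMap F K x = t := by
  have hne : (X ^ q - X : F[X]) ≠ 0 := X_pow_card_sub_X_ne_zero F Fintype.one_lt_card
  have hroots := roots_map_of_injective_of_card_eq_natDegree (algebraMap F K).injective
    (p := X ^ q - X) (by
      rw [roots_X_pow_card_sub_X, X_pow_card_sub_X_natDegree_eq F Fintype.one_lt_card]
      simp)
  have ht' : t ∈ ((X ^ q - X : F[X]).map (algebraMap F K)).roots := by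
    rw [mem_roots (Polynomial.map_ne_zero hne)]
    simp [ht]
  rw [← hroots, roots_X_pow_card_sub_X, Multiset.mem_map] at ht'
  obtain ⟨x, -, hx⟩ := ht'
  exact ⟨x, hx⟩

theorem exists_algebraMap_eq_add_div {y : K} (hy : y ≠ 0)
    (h : y ^ q = y ∨ y ^ q = algebraMap F K a / y) :
    ∃ x : F, algebraMap F K x = y + algebraMap F K a / y :=
  exists_algebraMap_eq_of_pow_card_eq <|
    (map_add_div_eq_self_iff (frobeniusAlgHom F K) (AlgHom.commutes _ a) hy).mpr h

theorem pow_card_sq_sub_one_eq_one (ha : a ≠ 0) {y : K} (hy : y ≠ 0)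
    (h : y ^ q = y ∨ y ^ q = algebraMap F K a / y) : y ^ (q ^ 2 - 1) = 1 := by
  have hb : algebraMap F K a ≠ 0 := by simpa
  have h2 : (y ^ q) ^ q = y :=
    map_map_eq_of_map_eq_or (frobeniusAlgHom F K) (AlgHom.commutes _ a) hb h
  refine mul_left_cancel₀ hy ?_
  rw [← pow_succ', Nat.sub_add_cancel (Nat.one_le_pow _ _ Fintype.card_pos), sq, pow_mul, h2,
    mul_one]

theorem exists_add_div_eq_algebraMap [IsAlgClosed K] (ha : a ≠ 0) (x : F) :
    ∃ y : K, y ≠ 0 ∧ algebraMap F K x = y + algebraMap F K a / y ∧ y ^ (q ^ 2 - 1) = 1 := by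
  have hb : algebraMap F K a ≠ 0 := by simpa
  obtain ⟨y, hy, hyx⟩ := IsAlgClosed.exists_add_div_eq hb (algebraMap F K x)
  have h := (map_add_div_eq_self_iff (frobeniusAlgHom F K) (AlgHom.commutes _ a) hy).mp
    (by rw [hyx]; exact AlgHom.commutes _ x)
  exact ⟨y, hy, hyx.symm, pow_card_sq_sub_one_eq_one ha hy h⟩

theorem injective_eval_dickson_of_coprime (ha : a ≠ 0) {d : ℕ} (hd : d.Coprime (q ^ 2 - 1)) :
    Injective fun x : F => (dickson 1 a d).eval x := by
  let K := AlgebraicClosure F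
  have hb : algebraMap F K a ≠ 0 := by simpa
  have hN : q ^ 2 - 1 ≠ 0 := by
    have := Nat.one_lt_pow two_ne_zero (Fintype.one_lt_card (α := F))
    omega
  intro x x' hxx'
  obtain ⟨y, hy, hx, hyN⟩ := exists_add_div_eq_algebraMap (K := K) ha x
  obtain ⟨z, hz, hx', hzN⟩ := exists_add_div_eq_algebraMap (K := K) ha x'
  have h := congrArg (algebraMap F K) hxx'
  simp only [algebraMap_eval_dickson_one hy hx, algebraMap_eval_dickson_one hz hx', div_pow] at h
  apply (algebraMap F K).injective
  rw [hx, hx', add_div_eq_add_div_iff hy hz]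
  exact eq_or_mul_eq_of_pow_add_div_pow_eq hd hN
    (pow_card_sq_sub_one_eq_one ha hb (.inl (AlgHom.commutes (frobeniusAlgHom F K) a))) hyN hzN h

theorem not_injective_eval_dickson_of_pow_eq [IsAlgClosed K] (ha : a ≠ 0) {d l m : ℕ} {c : K}
    (hl : 1 < l) (hld : l ∣ d) (hlm : l ∣ m) (hm : (m : K) ≠ 0) (hm2 : 2 < m) (hc : c ≠ 0)
    (hfix : ∀ w : K, w ^ m = c → w ^ q = w ∨ w ^ q = algebraMap F K a / w) :
    ¬Injective fun x : F => (dickson 1 a d).eval x := by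
  classical
  set b := algebraMap F K a
  have hb : b ≠ 0 := by simpa [b]
  have hl0 : (l : K) ≠ 0 := fun h => hm (by simpa [h] using Nat.cast_dvd_cast (α := K) hlm)
  obtain ⟨ζ, hζl, hζ1⟩ := IsAlgClosed.exists_pow_eq_and_notMem hl0 one_ne_zero
    (s := {1}) (by simpa using hl)
  obtain ⟨r, hr⟩ := IsAlgClosed.exists_pow_nat_eq (b / ζ) two_pos
  obtain ⟨y, hym, hyr⟩ := IsAlgClosed.exists_pow_eq_and_notMem hm hc
    (s := {r, -r}) ((Finset.card_le_two).trans_lt hm2)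
  have hζ0 : ζ ≠ 0 := by rintro rfl; simp [zero_pow (by omega : l ≠ 0)] at hζl
  have hy0 : y ≠ 0 := by rintro rfl; simp [zero_pow (by omega : m ≠ 0), hc.symm] at hym
  have hζy : ζ * y ^ 2 ≠ b := by
    intro h
    have hyr2 : y ^ 2 = r ^ 2 := by rw [hr, eq_div_iff hζ0]; linear_combination h
    exact hyr (by simpa using sq_eq_sq_iff_eq_or_eq_neg.mp hyr2)
  have hζ_pow {n : ℕ} (hn : l ∣ n) : ζ ^ n = 1 := by
    obtain ⟨k, rfl⟩ := hn
    rw [pow_mul, hζl, one_pow]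
  have hζym : (ζ * y) ^ m = c := by rw [mul_pow, hζ_pow hlm, one_mul, hym]
  obtain ⟨x, hx⟩ := exists_algebraMap_eq_add_div hy0 (hfix y hym)
  have hζy0 : ζ * y ≠ 0 := mul_ne_zero hζ0 hy0
  obtain ⟨x', hx'⟩ := exists_algebraMap_eq_add_div hζy0 (hfix _ hζym)
  intro hinj
  have hxx' : x = x' := hinj <| (algebraMap F K).injective <| by
    simp only [algebraMap_eval_dickson_one hy0 hx, algebraMap_eval_dickson_one hζy0 hx',
      div_pow, mul_pow, hζ_pow hld, one_mul]
  have h := congrArg (algebraMap F K) hxx'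
  rw [hx, hx', add_div_eq_add_div_iff hy0 hζy0] at h
  rcases h with h | h
  · exact hζ1 (by simpa [hy0] using congrArg (· / y) h.symm)
  · exact hζy (by linear_combination h)

theorem not_injective_eval_dickson_of_dvd_card_add_one (ha : a ≠ 0) {d l : ℕ} (hl : 1 < l)
    (hld : l ∣ d) (hlq : l ∣ q + 1) : ¬Injective fun x : F => (dickson 1 a d).eval x := by
  let K := AlgebraicClosure F
  have hb : algebraMap F K a ≠ 0 := by simpa
  refine not_injective_eval_dickson_of_pow_eq (K := K) ha hl hld hlq ?_
    (by have := Fintype.one_lt_card (α := F); omega) hb fun w hw => .inr ?_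
  · simp [natCast_card_eq_zero]
  · have hw0 : w ≠ 0 := by rintro rfl; simp [hb.symm] at hw
    exact eq_div_of_mul_eq hw0 (by rwa [← pow_succ])

theorem not_injective_eval_dickson_of_dvd_card_sub_one (ha : a ≠ 0) {d l : ℕ} (hl : 2 < l)
    (hld : l ∣ d) (hlq : l ∣ q - 1) : ¬Injective fun x : F => (dickson 1 a d).eval x := by
  have hq := Fintype.one_lt_card (α := F)
  refine not_injective_eval_dickson_of_pow_eq (K := AlgebraicClosure F) ha (by omega) hld hlq ?_
    (by have := Nat.le_of_dvd (by omega) hlq; omega) one_ne_zero fun w hw => .inl ?_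
  · simp [Nat.cast_sub hq.le, natCast_card_eq_zero]
  · rw [← Nat.sub_add_cancel hq.le, pow_succ, hw, one_mul]

theorem bijective_eval_dickson_one_iff (ha : a ≠ 0) (d : ℕ) :
    Bijective (fun x : F => (dickson 1 a d).eval x) ↔ d.Coprime (q ^ 2 - 1) := by
  rw [← Finite.injective_iff_bijective]
  refine ⟨fun hinj => ?_, injective_eval_dickson_of_coprime ha⟩
  by_contra hcop
  obtain ⟨l, hl, hld, hlq⟩ := Nat.Prime.not_coprime_iff_dvd.mp hcop
  have hq := Fintype.one_lt_card (α := F)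
  rw [show q ^ 2 - 1 = (q + 1) * (q - 1) by simpa using Nat.sq_sub_sq q 1] at hlq
  by_cases hA : l ∣ q + 1
  · exact not_injective_eval_dickson_of_dvd_card_add_one ha hl.one_lt hld hA hinj
  · have hB := (hl.dvd_mul.mp hlq).resolve_left hA
    have hl2 : l ≠ 2 := by rintro rfl; omega
    exact not_injective_eval_dickson_of_dvd_card_sub_one ha (by have := hl.two_le; omega) hld hB
      hinj

end FiniteField

theorem stmt_10_general (p n d : ℕ)
    (F : Type) [Field F] [Fintype F] (hF : Fintype.card F = p ^ n) (a : F) (ha : a ≠ 0) :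
    (Function.Bijective fun x : F => Polynomial.eval x (Polynomial.dickson 1 a d)) ↔
      Nat.gcd d (p ^ (2 * n) - 1) = 1 := by
  rw [FiniteField.bijective_eval_dickson_one_iff ha, hF, ← pow_mul, mul_comm,
    Nat.coprime_iff_gcd_eq_one]

theorem stmt_10 (p n d : ℕ) (hp : p.Prime) (hn : 0 < n) (hd : 0 < d)
    (F : Type) [Field F] [Fintype F] (hF : Fintype.card F = p ^ n) (a : F) (ha : a ≠ 0) :
    (Function.Bijective fun x : F => Polynomial.eval x (Polynomial.dickson 1 a d)) ↔
      Nat.gcd d (p ^ (2 * n) - 1) = 1 :=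
  stmt_10_general p n d F hF a ha
end

section
/- Let p be a prime, k ≥ 1, n ≥ 2, c in F_{p^n} with c ≠ 1, and γ in F_{p^n}*. Suppose there exists a in F_{p^n}* with Tr(a/(1-c)) ≠ 0 and γ = -a^{p^k+1} / (Tr(a/(1-c))·(1-c)²). Then G₁(x) = x^{p^k+1} + γ·Tr(x) is not perfect c-nonlinear; specifically, the c-derivative x ↦ G₁(x+a) - c·G₁(x) is not injective (it maps both 0 and -a/(1-c) to the same value). -/
/-!
Write `q = p ^ k` and `s = a / (1 - c)`, so that `a = (1 - c) s` and `-s + a = -c s`. In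
characteristic `p` the map `x ↦ x ^ (q + 1)` is even and `(x - y) ^ (q + 1) = (x - y) (x ^ q - y ^ q)`,
so evaluating the `c`-derivative of `x ^ (q + 1) + γ L x` (with `L` additive) at `-s` and at `0`
gives values differing by `(1 - c) ^ q s ^ (q + 1) + (1 - c) γ L s`. The choice of `γ` makes this
vanish as soon as `L s ≠ 0`, and `-s ≠ 0` because `a ≠ 0`.
-/

def cDeriv {R : Type*} [Ring R] (G : R → R) (c a : R) (x : R) : R := G (x + a) - c * G x

section ExpChar

variable {R : Type*} [CommRing R] {p : ℕ} [ExpChar R p] (k : ℕ)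

theorem neg_pow_expChar_pow_succ (x : R) : (-x) ^ (p ^ k + 1) = x ^ (p ^ k + 1) := by
  rw [neg_pow, pow_succ, neg_one_pow_expChar_pow]
  ring

theorem sub_pow_expChar_pow_succ (x y : R) :
    (x - y) ^ (p ^ k + 1) = (x - y) * (x ^ p ^ k - y ^ p ^ k) := by
  rw [pow_succ', sub_pow_expChar_pow]

theorem cDeriv_pow_expChar_pow_succ_add_neg (L : R →+ R) {c γ a s : R}
    (hs : a = (1 - c) * s) :
    cDeriv (fun x => x ^ (p ^ k + 1) + γ * L x) c a (-s) =
      cDeriv (fun x => x ^ (p ^ k + 1) + γ * L x) c a 0 -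
        ((1 - c) ^ p ^ k * s ^ (p ^ k + 1) + (1 - c) * γ * L s) := by
  have hshift : (-s + a) ^ (p ^ k + 1) = c ^ (p ^ k + 1) * s ^ (p ^ k + 1) := by
    rw [show -s + a = -(c * s) by rw [hs]; ring, neg_pow_expChar_pow_succ, mul_pow]
  have ha : a ^ (p ^ k + 1) = (1 - c) * (1 - c ^ p ^ k) * s ^ (p ^ k + 1) := by
    rw [hs, mul_pow, sub_pow_expChar_pow_succ, one_pow]
  have hfrob : (1 - c) ^ p ^ k = 1 - c ^ p ^ k := by
    rw [sub_pow_expChar_pow, one_pow]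
  simp only [cDeriv, zero_add, map_zero, map_add, map_neg, neg_pow_expChar_pow_succ, hshift, ha,
    hfrob, mul_zero, add_zero, zero_pow (Nat.succ_ne_zero _)]
  ring

end ExpChar

theorem cDeriv_pow_expChar_pow_succ_zero_eq_neg {F : Type*} [Field F] {p : ℕ} [ExpChar F p]
    (k : ℕ) (L : F →+ F) {c γ a s : F} (hc : c ≠ 1) (hs : a = (1 - c) * s) (hL : L s ≠ 0)
    (hγ : γ = -a ^ (p ^ k + 1) / (L s * (1 - c) ^ 2)) :
    cDeriv (fun x => x ^ (p ^ k + 1) + γ * L x) c a 0 =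
      cDeriv (fun x => x ^ (p ^ k + 1) + γ * L x) c a (-s) := by
  have hu : 1 - c ≠ 0 := sub_ne_zero.mpr hc.symm
  rw [cDeriv_pow_expChar_pow_succ_add_neg k L hs, eq_comm, sub_eq_self, hγ, hs, mul_pow,
    pow_succ (1 - c)]
  field_simp
  ring

theorem stmt_18_general (p k : ℕ) (hp : p.Prime)
    (F : Type) [Field F] [Algebra (ZMod p) F]
    (c : F) (hc : c ≠ 1) (γ a : F) (ha : a ≠ 0)
    (htr : Algebra.trace (ZMod p) F (a / (1 - c)) ≠ 0)
    (hγ : γ = -a ^ (p ^ k + 1) /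
        (algebraMap (ZMod p) F (Algebra.trace (ZMod p) F (a / (1 - c))) * (1 - c) ^ 2)) :
    (fun x : F => ((x + a) ^ (p ^ k + 1) +
          γ * algebraMap (ZMod p) F (Algebra.trace (ZMod p) F (x + a))) -
        c * (x ^ (p ^ k + 1) + γ * algebraMap (ZMod p) F (Algebra.trace (ZMod p) F x))) 0 =
      (fun x : F => ((x + a) ^ (p ^ k + 1) +
          γ * algebraMap (ZMod p) F (Algebra.trace (ZMod p) F (x + a))) -
        c * (x ^ (p ^ k + 1) + γ * algebraMap (ZMod p) F (Algebra.trace (ZMod p) F x)))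
        (-(a / (1 - c))) ∧
      ¬ Function.Injective fun x : F => ((x + a) ^ (p ^ k + 1) +
          γ * algebraMap (ZMod p) F (Algebra.trace (ZMod p) F (x + a))) -
        c * (x ^ (p ^ k + 1) + γ * algebraMap (ZMod p) F (Algebra.trace (ZMod p) F x)) := by
  have : Fact p.Prime := ⟨hp⟩
  have : CharP F p := charP_of_injective_algebraMap (algebraMap (ZMod p) F).injective p
  have hu : 1 - c ≠ 0 := sub_ne_zero.mpr hc.symm
  have hcollide := cDeriv_pow_expChar_pow_succ_zero_eq_neg k
    ((Algebra.linearMap (ZMod p) F).comp (Algebra.trace (ZMod p) F)).toAddMonoidHom hc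
    (mul_div_cancel₀ a hu).symm ((map_ne_zero (algebraMap (ZMod p) F)).mpr htr) hγ
  exact ⟨hcollide, fun hinj => neg_ne_zero.mpr (div_ne_zero ha hu) (hinj hcollide).symm⟩

theorem stmt_18 (p n k : ℕ) (hp : p.Prime) (hk : 1 ≤ k) (hn : 2 ≤ n)
    (F : Type) [Field F] [Fintype F] [Algebra (ZMod p) F] (hF : Fintype.card F = p ^ n)
    (c : F) (hc : c ≠ 1) (γ a : F) (ha : a ≠ 0)
    (htr : Algebra.trace (ZMod p) F (a / (1 - c)) ≠ 0)
    (hγ : γ = -a ^ (p ^ k + 1) /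
        (algebraMap (ZMod p) F (Algebra.trace (ZMod p) F (a / (1 - c))) * (1 - c) ^ 2)) :
    (fun x : F => ((x + a) ^ (p ^ k + 1) +
          γ * algebraMap (ZMod p) F (Algebra.trace (ZMod p) F (x + a))) -
        c * (x ^ (p ^ k + 1) + γ * algebraMap (ZMod p) F (Algebra.trace (ZMod p) F x))) 0 =
      (fun x : F => ((x + a) ^ (p ^ k + 1) +
          γ * algebraMap (ZMod p) F (Algebra.trace (ZMod p) F (x + a))) -
        c * (x ^ (p ^ k + 1) + γ * algebraMap (ZMod p) F (Algebra.trace (ZMod p) F x)))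
        (-(a / (1 - c))) ∧
      ¬ Function.Injective fun x : F => ((x + a) ^ (p ^ k + 1) +
          γ * algebraMap (ZMod p) F (Algebra.trace (ZMod p) F (x + a))) -
        c * (x ^ (p ^ k + 1) + γ * algebraMap (ZMod p) F (Algebra.trace (ZMod p) F x)) :=
  stmt_18_general p k hp F c hc γ a ha htr hγ
end
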